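/- Let P_s □ P_t (s, t ≥ 2) be the grid graph, i.e., the Cartesian product of paths on s and t vertices, for which κ(P_s □ P_t) = s + t − 2. For every real number k with 1 ≤ k ≤ s + t − 2, dim_f^k(P_s □ P_t) = 2k. -/

import Mathlib

open Finset

namespace FracDim

variable {V : Type*}

/-- `R{x,y}`: the set of vertices `z` with `d(x,z) ≠ d(y,z)`. -/
noncomputable def resSet [Fintype V] (G : SimpleGraph V) (x y : V) : Finset V :=
  Finset.univ.filter (fun z => G.dist x z ≠ G.dist y z)

/-- `κ(G) = min { |R{x,y}| : x ≠ y }`. -/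
noncomputable def kappa [Fintype V] (G : SimpleGraph V) : ℕ :=
  sInf {n : ℕ | ∃ x y : V, x ≠ y ∧ (resSet G x y).card = n}

/-- A `k`-resolving function: `g : V → [0,1]` with `g(R{x,y}) ≥ k` for all distinct `x, y`. -/
def IsKResolving [Fintype V] (G : SimpleGraph V) (k : ℝ) (g : V → ℝ) : Prop :=
  (∀ v, 0 ≤ g v ∧ g v ≤ 1) ∧
    ∀ x y : V, x ≠ y → k ≤ ∑ z ∈ resSet G x y, g z

/-- The fractional `k`-metric dimension of `G`. -/
noncomputable def fracKDim [Fintype V] (G : SimpleGraph V) (k : ℝ) : ℝ :=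
  sInf {s : ℝ | ∃ g : V → ℝ, IsKResolving G k g ∧ s = ∑ v, g v}

/-- The fractional metric dimension of `G`. -/
noncomputable def fracDim [Fintype V] (G : SimpleGraph V) : ℝ :=
  fracKDim G 1

end FracDim

/-!
On `P_s □ P_t` the graph distance is the `ℓ¹` distance of the coordinates. Let `B` be the
boundary, the `2 (s + t - 2)` vertices with a coordinate at an end of its path.

Every `R{x,y}` contains at least `s + t - 2` vertices of `B`. Split `B` into the `s + t - 2`
pairs `{(0,j), (s-1,j)}` and `{(i,0), (i,t-1)}`, `0 < i < s - 1`. If `x` and `y` differ in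
both coordinates, every pair meets `R{x,y}`, because the two ends of a path see two distinct
vertices of it with opposite differences of distances. If they agree in one coordinate, at most
two vertices of `B` lie outside `R{x,y}`. Hence `κ ≥ s + t - 2`, and the function equal to
`k / (s + t - 2)` on `B` is `k`-resolving of total weight `2k`.

Conversely, the two neighbours of a corner `c` are resolved exactly by the two sides through
`c`, minus `c`: `s + t - 2` vertices, so `κ ≤ s + t - 2`. Each vertex is resolved by at most
two of the four corner pairs, so adding the four constraints on a `k`-resolving `g` gives
`4k ≤ 2 ∑ g`.
-/

open SimpleGraph

namespace SimpleGraph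

theorem natDist_le_length_of_walk_pathGraph {n : ℕ} {i j : Fin n} (w : (pathGraph n).Walk i j) :
    Nat.dist i j ≤ w.length := by
  induction w with
  | nil => simp
  | @cons u v w huv _ ih =>
    have hstep : Nat.dist u v = 1 := by
      rw [pathGraph_adj] at huv
      unfold Nat.dist
      omega
    have := Nat.dist.triangle_inequality u v w
    rw [Walk.length_cons]
    omega

theorem pathGraph_dist {n : ℕ} (i j : Fin n) : (pathGraph n).dist i j = Nat.dist i j := by
  have : Nonempty (Fin n) := ⟨i⟩
  have hconn : (pathGraph n).Connected := ⟨pathGraph_preconnected n⟩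
  refine le_antisymm ?_ ?_
  · have hpath : ∀ d (i j : Fin n), (j : ℕ) = i + d → (pathGraph n).dist i j ≤ d := by
      intro d
      induction d with
      | zero => intro i j h; simp [Fin.ext h]
      | succ d ih =>
        intro i j h
        let j' : Fin n := ⟨i + d, by omega⟩
        have hadj : (pathGraph n).Adj j' j := by rw [pathGraph_adj]; simp only [j']; omega
        calc (pathGraph n).dist i j ≤ (pathGraph n).dist i j' + (pathGraph n).dist j' j :=
              hconn.dist_triangle
          _ ≤ d + 1 := by rw [dist_eq_one_iff_adj.mpr hadj]; exact add_le_add_left (ih i j' rfl) 1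
    rcases le_total (i : ℕ) j with hij | hij
    · exact hpath _ i j (by unfold Nat.dist; omega)
    · rw [dist_comm]; exact hpath _ j i (by unfold Nat.dist; omega)
  · obtain ⟨w, hw⟩ := hconn.exists_walk_length_eq_dist i j
    exact hw ▸ natDist_le_length_of_walk_pathGraph w

theorem dist_boxProd {α β : Type*} {G : SimpleGraph α} {H : SimpleGraph β}
    (hG : G.Connected) (hH : H.Connected) (x y : α × β) :
    (G □ H).dist x y = G.dist x.1 y.1 + H.dist x.2 y.2 := by
  rw [dist, edist_boxProd, ENat.toNat_add (edist_ne_top_iff_reachable.mpr (hG x.1 y.1))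
    (edist_ne_top_iff_reachable.mpr (hH x.2 y.2))]
  rfl

end SimpleGraph

namespace FracDim

variable {V : Type*} [Fintype V] {G : SimpleGraph V}

theorem kappa_eq_of_forall_le {n : ℕ} (hwit : ∃ x y : V, x ≠ y ∧ #(resSet G x y) ≤ n)
    (hlow : ∀ x y : V, x ≠ y → n ≤ #(resSet G x y)) : kappa G = n := by
  obtain ⟨x, y, hxy, hle⟩ := hwit
  have hcard : #(resSet G x y) = n := le_antisymm hle (hlow x y hxy)
  exact le_antisymm (Nat.sInf_le ⟨x, y, hxy, hcard⟩)
    (le_csInf ⟨n, x, y, hxy, hcard⟩ (by rintro _ ⟨x, y, hxy, rfl⟩; exact hlow x y hxy))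

theorem fracKDim_le_sum {k : ℝ} {g : V → ℝ} (hg : IsKResolving G k g) :
    fracKDim G k ≤ ∑ v, g v :=
  csInf_le ⟨0, by rintro _ ⟨g, hg, rfl⟩; exact sum_nonneg fun v _ ↦ (hg.1 v).1⟩ ⟨g, hg, rfl⟩

theorem le_fracKDim {k b : ℝ} (hne : ∃ g, IsKResolving G k g)
    (hlow : ∀ g, IsKResolving G k g → b ≤ ∑ v, g v) : b ≤ fracKDim G k := by
  obtain ⟨g, hg⟩ := hne
  exact le_csInf ⟨_, g, hg, rfl⟩ (by rintro _ ⟨g, hg, rfl⟩; exact hlow g hg)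

theorem isKResolving_indicator [DecidableEq V] {B : Finset V} {m : ℕ} {k : ℝ} (hk : 0 ≤ k)
    (hkm : k ≤ m) (hB : ∀ x y : V, x ≠ y → m ≤ #(resSet G x y ∩ B)) :
    IsKResolving G k (fun v ↦ if v ∈ B then k / m else 0) := by
  have hc : 0 ≤ k / m ∧ k / m ≤ 1 := ⟨by positivity, div_le_one_of_le₀ hkm (Nat.cast_nonneg m)⟩
  refine ⟨fun v ↦ ?_, fun x y hxy ↦ ?_⟩
  · dsimp only
    split_ifs
    exacts [hc, ⟨le_rfl, zero_le_one⟩]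
  · rw [sum_ite_mem, sum_const, nsmul_eq_mul]
    rcases (Nat.zero_le m).eq_or_lt with rfl | hm
    · simp_all
    calc k = m * (k / m) := by field_simp
      _ ≤ _ := mul_le_mul_of_nonneg_right (by exact_mod_cast hB x y hxy) hc.1

theorem IsKResolving.card_mul_le_mul_sum [DecidableEq V] {k : ℝ} {g : V → ℝ}
    (hg : IsKResolving G k g) {ι : Type*} [Fintype ι] (p : ι → V × V)
    (hp : ∀ i, (p i).1 ≠ (p i).2) {m : ℕ} (hm : ∀ z, #{i | z ∈ resSet G (p i).1 (p i).2} ≤ m) :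
    Fintype.card ι * k ≤ m * ∑ v, g v := by
  calc Fintype.card ι * k = ∑ i : ι, k := by simp
    _ ≤ ∑ i, ∑ z ∈ resSet G (p i).1 (p i).2, g z := sum_le_sum fun i _ ↦ hg.2 _ _ (hp i)
    _ = ∑ z, #{i | z ∈ resSet G (p i).1 (p i).2} * g z := by
      rw [sum_comm' (t' := univ) (s' := fun z ↦ {i | z ∈ resSet G (p i).1 (p i).2})
        (by simp)]
      simp
    _ ≤ ∑ z, m * g z := sum_le_sum fun z _ ↦
      mul_le_mul_of_nonneg_right (by exact_mod_cast hm z) (hg.1 z).1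
    _ = m * ∑ v, g v := (mul_sum _ _ _).symm

variable {s t : ℕ}

abbrev gridGraph (s t : ℕ) : SimpleGraph (Fin s × Fin t) := pathGraph s □ pathGraph t

theorem mem_resSet_gridGraph {x y z : Fin s × Fin t} :
    z ∈ resSet (gridGraph s t) x y ↔
      Nat.dist x.1 z.1 + Nat.dist x.2 z.2 ≠ Nat.dist y.1 z.1 + Nat.dist y.2 z.2 := by
  have : Nonempty (Fin s) := ⟨z.1⟩
  have : Nonempty (Fin t) := ⟨z.2⟩
  simp [resSet, dist_boxProd ⟨pathGraph_preconnected s⟩ ⟨pathGraph_preconnected t⟩,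
    pathGraph_dist]

def pathEnds (n : ℕ) : Finset (Fin n) := {i | (i : ℕ) = 0 ∨ (i : ℕ) = n - 1}

def gridBoundary (s t : ℕ) : Finset (Fin s × Fin t) := {z | z.1 ∈ pathEnds s ∨ z.2 ∈ pathEnds t}

theorem mem_gridBoundary {z : Fin s × Fin t} : z ∈ gridBoundary s t ↔
    ((z.1 : ℕ) = 0 ∨ (z.1 : ℕ) = s - 1) ∨ ((z.2 : ℕ) = 0 ∨ (z.2 : ℕ) = t - 1) := by
  simp [gridBoundary, pathEnds]

theorem card_pathEnds {n : ℕ} (hn : 2 ≤ n) : #(pathEnds n) = 2 := by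
  have : pathEnds n = {⟨0, by omega⟩, ⟨n - 1, by omega⟩} := by
    ext i
    simp [pathEnds, Fin.ext_iff]
  rw [this, card_pair (by simp [Fin.ext_iff]; omega)]

theorem card_gridBoundary (hs : 2 ≤ s) (ht : 2 ≤ t) :
    #(gridBoundary s t) = 2 * (s + t - 2) := by
  have hcompl : gridBoundary s t = ((pathEnds s)ᶜ ×ˢ (pathEnds t)ᶜ)ᶜ := by
    ext z
    simp [gridBoundary, or_iff_not_and_not]
  rw [hcompl, card_compl, card_product, card_compl, card_compl, card_pathEnds hs,
    card_pathEnds ht]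
  simp only [Fintype.card_prod, Fintype.card_fin]
  obtain ⟨s, rfl⟩ := Nat.exists_eq_add_of_le hs
  obtain ⟨t, rfl⟩ := Nat.exists_eq_add_of_le ht
  simp only [Nat.add_sub_cancel_left]
  rw [Nat.sub_eq_iff_eq_add (by nlinarith)]
  ring_nf
  omega

-- The boundary splits into the pairs `{(0,j), (s-1,j)}`, numbered `j`, and
-- `{(i,0), (i,t-1)}` with `0 < i < s - 1`, numbered `t + i - 1`.
def boundaryPairIndex (z : Fin s × Fin t) : ℕ :=
  if (z.1 : ℕ) = 0 ∨ (z.1 : ℕ) = s - 1 then z.2 else t + z.1 - 1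

theorem card_le_of_injOn_boundaryPairIndex (hs : 2 ≤ s) {S : Finset (Fin s × Fin t)}
    (hS : S ⊆ gridBoundary s t) (hinj : Set.InjOn boundaryPairIndex (S : Set (Fin s × Fin t))) :
    #S ≤ s + t - 2 := by
  refine (card_le_card_of_injOn boundaryPairIndex (fun z hz ↦ ?_) hinj).trans_eq (card_range _)
  have := mem_gridBoundary.mp (hS hz)
  have := z.1.isLt
  have := z.2.isLt
  simp only [coe_range, Set.mem_Iio, boundaryPairIndex]
  split_ifs <;> omega

theorem eq_of_dist_eq_of_mem_ends {n a c i i' e e' : ℕ} (ha : a < n) (hc : c < n) (hac : a ≠ c)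
    (hi : i = 0 ∨ i = n - 1) (hi' : i' = 0 ∨ i' = n - 1)
    (h : Nat.dist a i + e = Nat.dist c i + e') (h' : Nat.dist a i' + e = Nat.dist c i' + e') :
    i = i' := by
  unfold Nat.dist at h h'
  omega

theorem card_gridBoundary_sdiff_resSet_le (hs : 2 ≤ s) (ht : 2 ≤ t) {x y : Fin s × Fin t}
    (hxy : x ≠ y) : #(gridBoundary s t \ resSet (gridGraph s t) x y) ≤ s + t - 2 := by
  have hx1 := x.1.isLt; have hx2 := x.2.isLt; have hy1 := y.1.isLt; have hy2 := y.2.isLt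
  rw [Ne, Prod.ext_iff, Fin.ext_iff, Fin.ext_iff] at hxy
  have hmem : ∀ z, z ∈ gridBoundary s t \ resSet (gridGraph s t) x y ↔
      (((z.1 : ℕ) = 0 ∨ (z.1 : ℕ) = s - 1) ∨ ((z.2 : ℕ) = 0 ∨ (z.2 : ℕ) = t - 1)) ∧
      Nat.dist x.1 z.1 + Nat.dist x.2 z.2 = Nat.dist y.1 z.1 + Nat.dist y.2 z.2 := by
    simp [mem_gridBoundary, mem_resSet_gridGraph]
  by_cases h1 : (x.1 : ℕ) = y.1
  · let j : Fin t := ⟨(x.2 + y.2) / 2, by omega⟩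
    calc _ ≤ #{((⟨0, by omega⟩, j) : Fin s × Fin t), (⟨s - 1, by omega⟩, j)} := by
          refine card_le_card fun z hz ↦ ?_
          obtain ⟨hzB, hzd⟩ := (hmem z).mp hz
          have := z.1.isLt; have := z.2.isLt
          simp only [mem_insert, mem_singleton, Prod.ext_iff, Fin.ext_iff, j]
          unfold Nat.dist at hzd
          omega
      _ ≤ 2 := card_le_two
      _ ≤ s + t - 2 := by omega
  by_cases h2 : (x.2 : ℕ) = y.2
  · let i : Fin s := ⟨(x.1 + y.1) / 2, by omega⟩
    calc _ ≤ #{((i, ⟨0, by omega⟩) : Fin s × Fin t), (i, ⟨t - 1, by omega⟩)} := by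
          refine card_le_card fun z hz ↦ ?_
          obtain ⟨hzB, hzd⟩ := (hmem z).mp hz
          have := z.1.isLt; have := z.2.isLt
          simp only [mem_insert, mem_singleton, Prod.ext_iff, Fin.ext_iff, i]
          unfold Nat.dist at hzd
          omega
      _ ≤ 2 := card_le_two
      _ ≤ s + t - 2 := by omega
  refine card_le_of_injOn_boundaryPairIndex hs sdiff_subset
    fun ⟨⟨i, hi⟩, ⟨j, hj⟩⟩ hz ⟨⟨i', hi'⟩, ⟨j', hj'⟩⟩ hz' heq ↦ ?_
  obtain ⟨hzB, hzd⟩ := (hmem _).mp hz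
  obtain ⟨hzB', hzd'⟩ := (hmem _).mp hz'
  simp only [boundaryPairIndex] at heq hzB hzB' hzd hzd'
  simp only [Prod.mk.injEq, Fin.mk.injEq]
  split_ifs at heq with hends hends' hends'
  · subst heq
    exact ⟨eq_of_dist_eq_of_mem_ends hx1 hy1 h1 hends hends' hzd hzd', rfl⟩
  · omega
  · omega
  · obtain rfl : i = i' := by omega
    exact ⟨rfl, eq_of_dist_eq_of_mem_ends (e := Nat.dist x.1 i) (e' := Nat.dist y.1 i)
      hx2 hy2 h2 (hzB.resolve_left hends) (hzB'.resolve_left hends') (by omega) (by omega)⟩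

theorem le_card_resSet_inter_gridBoundary (hs : 2 ≤ s) (ht : 2 ≤ t) {x y : Fin s × Fin t}
    (hxy : x ≠ y) : s + t - 2 ≤ #(resSet (gridGraph s t) x y ∩ gridBoundary s t) := by
  have hsplit := card_inter_add_card_sdiff (gridBoundary s t) (resSet (gridGraph s t) x y)
  rw [card_gridBoundary hs ht, inter_comm] at hsplit
  have := card_gridBoundary_sdiff_resSet_le hs ht hxy
  omega

def pathEnd (n : ℕ) (b : Bool) : ℕ := if b then n - 1 else 0

def pathEndNeighbor (n : ℕ) (b : Bool) : ℕ := if b then n - 2 else 1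

def cornerPair (hs : 2 ≤ s) (ht : 2 ≤ t) (c : Bool × Bool) :
    (Fin s × Fin t) × (Fin s × Fin t) :=
  ((⟨pathEndNeighbor s c.1, by unfold pathEndNeighbor; split <;> omega⟩,
      ⟨pathEnd t c.2, by unfold pathEnd; split <;> omega⟩),
    (⟨pathEnd s c.1, by unfold pathEnd; split <;> omega⟩,
      ⟨pathEndNeighbor t c.2, by unfold pathEndNeighbor; split <;> omega⟩))

theorem cornerPair_ne (hs : 2 ≤ s) (ht : 2 ≤ t) (c : Bool × Bool) :
    (cornerPair hs ht c).1 ≠ (cornerPair hs ht c).2 := by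
  simp only [cornerPair, ne_eq, Prod.mk.injEq, Fin.mk.injEq, pathEnd, pathEndNeighbor]
  cases c.1 <;> simp only [Bool.false_eq_true, ↓reduceIte] <;> omega

theorem mem_resSet_cornerPair (hs : 2 ≤ s) (ht : 2 ≤ t) (c : Bool × Bool) (z : Fin s × Fin t) :
    z ∈ resSet (gridGraph s t) (cornerPair hs ht c).1 (cornerPair hs ht c).2 ↔
      (z.1 : ℕ) = pathEnd s c.1 ∧ (z.2 : ℕ) ≠ pathEnd t c.2 ∨
        (z.1 : ℕ) ≠ pathEnd s c.1 ∧ (z.2 : ℕ) = pathEnd t c.2 := by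
  have := z.1.isLt; have := z.2.isLt
  rw [mem_resSet_gridGraph]
  simp only [cornerPair, pathEnd, pathEndNeighbor]
  unfold Nat.dist
  cases c.1 <;> cases c.2 <;> simp only [Bool.false_eq_true, ↓reduceIte] <;> omega

theorem card_filter_mem_resSet_cornerPair_le (hs : 2 ≤ s) (ht : 2 ≤ t) (z : Fin s × Fin t) :
    #{c | z ∈ resSet (gridGraph s t) (cornerPair hs ht c).1 (cornerPair hs ht c).2}
      ≤ 2 := by
  simp only [mem_resSet_cornerPair, card_filter, Fintype.sum_prod_type, Fintype.sum_bool,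
    pathEnd, Bool.false_eq_true, ↓reduceIte]
  split_ifs <;> omega

theorem card_resSet_cornerPair_le (hs : 2 ≤ s) (ht : 2 ≤ t) (c : Bool × Bool) :
    #(resSet (gridGraph s t) (cornerPair hs ht c).1 (cornerPair hs ht c).2)
      ≤ s + t - 2 := by
  have hmem := mem_resSet_cornerPair hs ht c
  refine card_le_of_injOn_boundaryPairIndex hs (fun z hz ↦ ?_)
    fun ⟨⟨i, hi⟩, ⟨j, hj⟩⟩ hz ⟨⟨i', hi'⟩, ⟨j', hj'⟩⟩ hz' heq ↦ ?_
  · have := z.1.isLt; have := z.2.isLt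
    rw [hmem] at hz
    rw [mem_gridBoundary]
    simp only [pathEnd] at hz
    split_ifs at hz <;> omega
  · rw [mem_coe, hmem] at hz hz'
    simp only [boundaryPairIndex, pathEnd] at hz hz' heq
    simp only [Prod.mk.injEq, Fin.mk.injEq]
    split_ifs at hz hz' heq <;> omega

end FracDim

open FracDim in
/-- For the grid graph `P_s □ P_t` (`s, t ≥ 2`), the Cartesian product of paths:
`κ(P_s □ P_t) = s + t − 2`, and for every real `k` with `1 ≤ k ≤ s + t − 2`,
`dim_f^k(P_s □ P_t) = 2k`. -/
theorem fracKDim_grid (s t : ℕ) (hs : 2 ≤ s) (ht : 2 ≤ t) :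
    kappa ((SimpleGraph.pathGraph s).boxProd (SimpleGraph.pathGraph t)) = s + t - 2 ∧
      ∀ k : ℝ, 1 ≤ k → k ≤ (s : ℝ) + (t : ℝ) - 2 →
        fracKDim ((SimpleGraph.pathGraph s).boxProd (SimpleGraph.pathGraph t)) k
          = 2 * k := by
  have hB := fun x y (hxy : x ≠ y) ↦ le_card_resSet_inter_gridBoundary hs ht hxy
  have hcast : ((s + t - 2 : ℕ) : ℝ) = s + t - 2 := by
    rw [Nat.cast_sub (by omega)]
    push_cast
    ring
  refine ⟨kappa_eq_of_forall_le ⟨_, _, cornerPair_ne hs ht (false, false),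
      card_resSet_cornerPair_le hs ht _⟩ fun x y hxy ↦ (hB x y hxy).trans
      (card_le_card inter_subset_left), fun k hk hks ↦ ?_⟩
  have hres := isKResolving_indicator (by linarith) (hcast ▸ hks) hB
  refine le_antisymm ((fracKDim_le_sum hres).trans_eq ?_) (le_fracKDim ⟨_, hres⟩ fun g hg ↦ ?_)
  · rw [Fintype.sum_ite_mem, sum_const, nsmul_eq_mul, card_gridBoundary hs ht, Nat.cast_mul,
      hcast]
    have : (s : ℝ) + t - 2 ≠ 0 := by linarith
    field_simp
    norm_num
  · have := hg.card_mul_le_mul_sum (cornerPair hs ht) (cornerPair_ne hs ht)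
      (card_filter_mem_resSet_cornerPair_le hs ht)
    simp only [Fintype.card_prod, Fintype.card_bool, Nat.reduceMul, Nat.cast_ofNat] at this
    linarith
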